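/- arXiv:1701.08383 — 3 statements merged into one kernel-verified Lean document; each statement's English description precedes it below -/
import Mathlib

section
/- Let M be a nonempty finite set of nonnegative real-valued functions on a finite set V with |V| ≥ 2, and let w ∈ V be such that for all m ∈ M, m(w) > (1/(|V|-1)) ∑_{v ≠ w} m(v). Then every covering weight x̄^M (i.e., every weight minimizing x ↦ max_{m ∈ M} ∑_v x(v) m(v)) satisfies x̄^M(w) = 0. -/
/-!
Moving the whole mass of `x` at `w` uniformly onto the other `|V| - 1` points gives again a
weight, and it changes `∑ v, x v * m v` by `x w * ((1 / (|V| - 1)) * ∑_{v ≠ w} m v - m w)`.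
Under the hypothesis on `w` this is negative for every `m ∈ M` as soon as `x w > 0`, so the
maximum over the finite set `M` drops strictly, contradicting that `x` is a covering weight.
-/

open Finset

namespace Finset

theorem sup'_lt_sup'_of_forall_lt {ι α : Type*} [LinearOrder α] {s : Finset ι}
    (hs : s.Nonempty) {f g : ι → α} (h : ∀ i ∈ s, f i < g i) : s.sup' hs f < s.sup' hs g :=
  (sup'_lt_iff hs).2 fun i hi => (h i hi).trans_le (le_sup' g hi)

end Finset

section SpreadMass

variable {V : Type*} [Fintype V] [DecidableEq V]

noncomputable def spreadMass (x : V → ℝ) (w : V) : V → ℝ :=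
  fun v => if v = w then 0 else x v + x w / ((Fintype.card V : ℝ) - 1)

theorem spreadMass_nonneg {x : V → ℝ} (hx : ∀ v, 0 ≤ x v) (w v : V) :
    0 ≤ spreadMass x w v := by
  have hcard : (1 : ℝ) ≤ Fintype.card V := by exact_mod_cast Fintype.card_pos_iff.2 ⟨w⟩
  unfold spreadMass
  split_ifs
  · exact le_rfl
  · exact add_nonneg (hx v) (div_nonneg (hx w) (by linarith))

theorem sum_spreadMass_mul (x : V → ℝ) (w : V) (f : V → ℝ) :
    ∑ v, spreadMass x w v * f v = ∑ v, x v * f v +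
      x w * ((1 / ((Fintype.card V : ℝ) - 1)) * ∑ v ∈ univ.erase w, f v - f w) := by
  have hoff : ∑ v ∈ univ.erase w, spreadMass x w v * f v =
      ∑ v ∈ univ.erase w, x v * f v +
        x w / ((Fintype.card V : ℝ) - 1) * ∑ v ∈ univ.erase w, f v := by
    rw [mul_sum, ← sum_add_distrib]
    refine sum_congr rfl fun v hv => ?_
    rw [spreadMass, if_neg (ne_of_mem_erase hv)]
    ring
  rw [← sum_erase_add _ _ (mem_univ w), ← sum_erase_add _ _ (mem_univ w), hoff, spreadMass,
    if_pos rfl]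
  ring

theorem sum_spreadMass (hV : 2 ≤ Fintype.card V) (x : V → ℝ) (w : V) :
    ∑ v, spreadMass x w v = ∑ v, x v := by
  have hc : ((univ.erase w).card : ℝ) = (Fintype.card V : ℝ) - 1 := by
    rw [card_erase_of_mem (mem_univ w), card_univ, Nat.cast_sub (by omega), Nat.cast_one]
  have hc0 : (Fintype.card V : ℝ) - 1 ≠ 0 := by
    have : (2 : ℝ) ≤ Fintype.card V := by exact_mod_cast hV
    linarith
  have h := sum_spreadMass_mul x w 1
  simp only [Pi.one_apply, mul_one, sum_const, nsmul_eq_mul, hc, one_div, inv_mul_cancel₀ hc0,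
    sub_self, mul_zero, add_zero] at h
  exact h

end SpreadMass

theorem covering_weight_vanishes_general {V : Type*} [Fintype V] [DecidableEq V]
    (hV : 2 ≤ Fintype.card V)
    (M : Finset (V → ℝ)) (hM : M.Nonempty)
    (w : V)
    (hw : ∀ m ∈ M, (1 / ((Fintype.card V : ℝ) - 1)) *
      ∑ v ∈ Finset.univ.erase w, m v < m w)
    (x : V → ℝ) (hx0 : ∀ v, 0 ≤ x v) (hx1 : ∑ v : V, x v = 1)
    (hcov : ∀ y : V → ℝ, (∀ v, 0 ≤ y v) → (∑ v : V, y v = 1) →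
      M.sup' hM (fun m => ∑ v : V, x v * m v) ≤
      M.sup' hM (fun m => ∑ v : V, y v * m v)) :
    x w = 0 := by
  by_contra hne
  have hxw : 0 < x w := (hx0 w).lt_of_ne' hne
  have hdrop : ∀ m ∈ M, ∑ v, spreadMass x w v * m v < ∑ v, x v * m v := fun m hm => by
    rw [sum_spreadMass_mul]
    exact add_lt_of_neg_right _ (mul_neg_of_pos_of_neg hxw (sub_neg.2 (hw m hm)))
  exact (hcov _ (spreadMass_nonneg hx0 w) (by rw [sum_spreadMass hV, hx1])).not_gt
    (sup'_lt_sup'_of_forall_lt hM hdrop)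

theorem covering_weight_vanishes {V : Type*} [Fintype V] [DecidableEq V]
    (hV : 2 ≤ Fintype.card V)
    (M : Finset (V → ℝ)) (hM : M.Nonempty) (hpos : ∀ m ∈ M, ∀ v, 0 ≤ m v)
    (w : V)
    (hw : ∀ m ∈ M, (1 / ((Fintype.card V : ℝ) - 1)) *
      ∑ v ∈ Finset.univ.erase w, m v < m w)
    (x : V → ℝ) (hx0 : ∀ v, 0 ≤ x v) (hx1 : ∑ v : V, x v = 1)
    (hcov : ∀ y : V → ℝ, (∀ v, 0 ≤ y v) → (∑ v : V, y v = 1) →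
      M.sup' hM (fun m => ∑ v : V, x v * m v) ≤
      M.sup' hM (fun m => ∑ v : V, y v * m v)) :
    x w = 0 :=
  covering_weight_vanishes_general hV M hM w hw x hx0 hx1 hcov
end

section
/- Let M be a nonempty finite set of histograms on V (each summing to |T|) with |V| ≥ 2, and w ∈ V such that m(w) < |T|/|V| for all m ∈ M. Then every supporting weight for M vanishes at w. -/
/-!
For a supporting weight `x`, the value `c = min_m ⟨x, m⟩` dominates the value at the uniform
weight, which is `|T| / |V|`; hence `m w < c` for every `m ∈ M`. If `x w > 0`, moving the mass at
`w` proportionally onto the other coordinates turns `⟨x, m⟩` into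
`(⟨x, m⟩ - x w * m w) / (1 - x w) > c` for every `m`, contradicting the maximality of `c`.
When `x w = 1` there is nothing to move, but then `⟨x, m⟩ = m w < c` already.
-/

open Finset Matrix

namespace stdSimplex

variable {V : Type*} [Fintype V]

lemma dotProduct_eq_of_apply_eq_one {x : V → ℝ} {w : V} (hx : x ∈ stdSimplex ℝ V)
    (hxw : x w = 1) (a : V → ℝ) : x ⬝ᵥ a = a w := by
  classical
  have hrest : ∀ v ∈ univ.erase w, x v = 0 := by
    refine (sum_eq_zero_iff_of_nonneg fun v _ => hx.1 v).1 ?_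
    linarith [sum_erase_add univ x (mem_univ w), hx.2]
  rw [dotProduct, ← sum_erase_add _ _ (mem_univ w), hxw, one_mul,
    sum_eq_zero fun v hv => by rw [hrest v hv, zero_mul], zero_add]

variable [DecidableEq V]

/-- The weight `x` conditioned on `{v ≠ w}`. -/
noncomputable def condNe (x : V → ℝ) (w : V) : V → ℝ :=
  (1 - x w)⁻¹ • (x - Pi.single w (x w))

lemma condNe_mem {x : V → ℝ} {w : V} (hx : x ∈ stdSimplex ℝ V) (hxw : x w < 1) :
    condNe x w ∈ stdSimplex ℝ V := by
  have hd : 0 < 1 - x w := sub_pos.2 hxw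
  refine ⟨fun v => ?_, ?_⟩
  · rcases eq_or_ne v w with rfl | hv
    · simp [condNe]
    · simpa [condNe, hv] using mul_nonneg (inv_nonneg.2 hd.le) (hx.1 v)
  · simp only [condNe, Pi.smul_apply, smul_eq_mul, ← mul_sum, Pi.sub_apply, sum_sub_distrib,
      sum_pi_single', mem_univ, if_true, hx.2]
    exact inv_mul_cancel₀ hd.ne'

lemma condNe_dotProduct (x a : V → ℝ) (w : V) :
    condNe x w ⬝ᵥ a = (x ⬝ᵥ a - x w * a w) / (1 - x w) := by
  rw [condNe, smul_dotProduct, sub_dotProduct, single_dotProduct, smul_eq_mul, inv_mul_eq_div]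

lemma lt_condNe_dotProduct {x a : V → ℝ} {w : V} {c : ℝ} (hxw : 0 < x w) (hxw1 : x w < 1)
    (hc : c ≤ x ⬝ᵥ a) (haw : a w < c) : c < condNe x w ⬝ᵥ a := by
  rw [condNe_dotProduct, lt_div_iff₀ (sub_pos.2 hxw1)]
  nlinarith

lemma exists_forall_lt_dotProduct {ι : Type*} {s : Finset ι} {a : ι → V → ℝ} {x : V → ℝ}
    {w : V} {c : ℝ} (hx : x ∈ stdSimplex ℝ V) (hxw : 0 < x w)
    (ha : ∀ i ∈ s, c ≤ x ⬝ᵥ a i ∧ a i w < c) :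
    ∃ y ∈ stdSimplex ℝ V, ∀ i ∈ s, c < y ⬝ᵥ a i := by
  rcases (mem_Icc_of_mem_stdSimplex hx w).2.lt_or_eq with hxw1 | hxw1
  · exact ⟨condNe x w, condNe_mem hx hxw1, fun i hi =>
      lt_condNe_dotProduct hxw hxw1 (ha i hi).1 (ha i hi).2⟩
  · refine ⟨x, hx, fun i hi => absurd (ha i hi).1 ?_⟩
    rw [dotProduct_eq_of_apply_eq_one hx hxw1, not_le]
    exact (ha i hi).2

end stdSimplex

theorem supporting_weight_vanishes_hist_general {V : Type*} [Fintype V] (Tcard : ℕ)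
    (M : Finset (V → ℕ)) (hM : M.Nonempty)
    (hhist : ∀ m ∈ M, ∑ v : V, m v = Tcard)
    (w : V)
    (hw : ∀ m ∈ M, (m w : ℝ) < (Tcard : ℝ) / (Fintype.card V : ℝ))
    (x : V → ℝ) (hx0 : ∀ v, 0 ≤ x v) (hx1 : ∑ v : V, x v = 1)
    (hsupp : ∀ y : V → ℝ, (∀ v, 0 ≤ y v) → (∑ v : V, y v = 1) →
      M.inf' hM (fun m => ∑ v : V, y v * (m v : ℝ)) ≤
      M.inf' hM (fun m => ∑ v : V, x v * (m v : ℝ))) :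
    x w = 0 := by
  classical
  by_contra hxw
  have : Nonempty V := ⟨w⟩
  have hmean : (Tcard : ℝ) / Fintype.card V ≤ M.inf' hM fun m => x ⬝ᵥ fun v => (m v : ℝ) := by
    have hu := (stdSimplex.barycenter : stdSimplex ℝ V).2
    refine (le_inf' hM _ fun m hm => le_of_eq ?_).trans (hsupp _ hu.1 hu.2)
    simp only [stdSimplex.barycenter_apply, ← mul_sum, ← Nat.cast_sum, hhist m hm,
      div_eq_inv_mul]
  obtain ⟨y, hy, hlt⟩ := stdSimplex.exists_forall_lt_dotProduct (s := M)
    (a := fun m v => (m v : ℝ)) ⟨hx0, hx1⟩ ((hx0 w).lt_of_ne' hxw)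
    fun m hm => ⟨inf'_le _ hm, (hw m hm).trans_le hmean⟩
  exact ((lt_inf'_iff hM).2 hlt).not_ge (hsupp y hy.1 hy.2)

theorem supporting_weight_vanishes_hist {V : Type*} [Fintype V] [DecidableEq V]
    (hV : 2 ≤ Fintype.card V) (Tcard : ℕ)
    (M : Finset (V → ℕ)) (hM : M.Nonempty)
    (hhist : ∀ m ∈ M, ∑ v : V, m v = Tcard)
    (w : V)
    (hw : ∀ m ∈ M, (m w : ℝ) < (Tcard : ℝ) / (Fintype.card V : ℝ))
    (x : V → ℝ) (hx0 : ∀ v, 0 ≤ x v) (hx1 : ∑ v : V, x v = 1)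
    (hsupp : ∀ y : V → ℝ, (∀ v, 0 ≤ y v) → (∑ v : V, y v = 1) →
      M.inf' hM (fun m => ∑ v : V, y v * (m v : ℝ)) ≤
      M.inf' hM (fun m => ∑ v : V, x v * (m v : ℝ))) :
    x w = 0 :=
  supporting_weight_vanishes_hist_general Tcard M hM hhist w hw x hx0 hx1 hsupp
end

section
/- Let M be a nonempty finite set of histograms on V (each summing to |T|) with |V| ≥ 2, and w ∈ V such that m(w) > |T|/|V| for all m ∈ M. Then every covering weight for M vanishes at w. -/
/-!
If `x w > 0`, move all of that mass onto the uniform weight. Against a histogram `m` the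
pairing then changes by `x w * (∑ m / |V| - m w)`, which is negative when `m w` exceeds the
average `|T| / |V|`. So if this holds for every `m ∈ M`, the new weight has a strictly smaller
maximal pairing, and `x` was not covering.
-/

open Finset

section

variable {V : Type*} [Fintype V] [DecidableEq V]

noncomputable def spreadUniform (x : V → ℝ) (w : V) : V → ℝ :=
  Function.update x w 0 + fun _ => x w / Fintype.card V

lemma spreadUniform_nonneg {x : V → ℝ} (hx : ∀ v, 0 ≤ x v) (w v : V) :
    0 ≤ spreadUniform x w v := by
  have : 0 ≤ Function.update x w 0 v := by
    rcases eq_or_ne v w with rfl | hvw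
    · simp
    · simpa [hvw] using hx v
  exact add_nonneg this (by have := hx w; positivity)

lemma sum_spreadUniform_mul (x m : V → ℝ) (w : V) :
    ∑ v, spreadUniform x w v * m v =
      ∑ v, x v * m v - x w * (m w - (∑ v, m v) / Fintype.card V) := by
  have hupdate : ∑ v, Function.update x w 0 v * m v = ∑ v, x v * m v - x w * m w := by
    have hterm : ∀ v, Function.update x w 0 v * m v =
        x v * m v - if v = w then x w * m w else 0 := by
      intro v
      rcases eq_or_ne v w with rfl | hvw <;> simp [*]
    simp only [hterm, sum_sub_distrib, sum_ite_eq', mem_univ, if_true]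
  simp only [spreadUniform, Pi.add_apply, add_mul, sum_add_distrib, hupdate, ← mul_sum]
  ring

lemma sum_spreadUniform (x : V → ℝ) (w : V) :
    ∑ v, spreadUniform x w v = ∑ v, x v := by
  have hcard : (Fintype.card V : ℝ) ≠ 0 := by
    have : Nonempty V := ⟨w⟩
    positivity
  simpa [hcard] using sum_spreadUniform_mul x 1 w

lemma sum_spreadUniform_mul_lt {x m : V → ℝ} {w : V} (hxw : 0 < x w)
    (hm : (∑ v, m v) / Fintype.card V < m w) :
    ∑ v, spreadUniform x w v * m v < ∑ v, x v * m v := by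
  rw [sum_spreadUniform_mul]
  have : 0 < x w * (m w - (∑ v, m v) / Fintype.card V) := mul_pos hxw (sub_pos.2 hm)
  linarith

end

theorem covering_weight_vanishes_hist_general {V : Type*} [Fintype V] [DecidableEq V]
    (Tcard : ℕ)
    (M : Finset (V → ℕ)) (hM : M.Nonempty)
    (hhist : ∀ m ∈ M, ∑ v : V, m v = Tcard)
    (w : V)
    (hw : ∀ m ∈ M, (Tcard : ℝ) / (Fintype.card V : ℝ) < (m w : ℝ))
    (x : V → ℝ) (hx0 : ∀ v, 0 ≤ x v) (hx1 : ∑ v : V, x v = 1)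
    (hcov : ∀ y : V → ℝ, (∀ v, 0 ≤ y v) → (∑ v : V, y v = 1) →
      M.sup' hM (fun m => ∑ v : V, x v * (m v : ℝ)) ≤
      M.sup' hM (fun m => ∑ v : V, y v * (m v : ℝ))) :
    x w = 0 := by
  by_contra hxw
  have hxw_pos : 0 < x w := (hx0 w).lt_of_ne' hxw
  have hdecrease : ∀ m ∈ M, ∑ v, spreadUniform x w v * (m v : ℝ) < ∑ v, x v * (m v : ℝ) := by
    intro m hm
    apply sum_spreadUniform_mul_lt hxw_pos
    rw [← Nat.cast_sum, hhist m hm]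
    exact hw m hm
  have hcover := hcov (spreadUniform x w) (spreadUniform_nonneg hx0 w)
    ((sum_spreadUniform x w).trans hx1)
  refine hcover.not_gt ((sup'_lt_iff _).2 fun m hm => (hdecrease m hm).trans_le ?_)
  exact le_sup' (fun m => ∑ v, x v * (m v : ℝ)) hm

theorem covering_weight_vanishes_hist {V : Type*} [Fintype V] [DecidableEq V]
    (hV : 2 ≤ Fintype.card V) (Tcard : ℕ)
    (M : Finset (V → ℕ)) (hM : M.Nonempty)
    (hhist : ∀ m ∈ M, ∑ v : V, m v = Tcard)
    (w : V)
    (hw : ∀ m ∈ M, (Tcard : ℝ) / (Fintype.card V : ℝ) < (m w : ℝ))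
    (x : V → ℝ) (hx0 : ∀ v, 0 ≤ x v) (hx1 : ∑ v : V, x v = 1)
    (hcov : ∀ y : V → ℝ, (∀ v, 0 ≤ y v) → (∑ v : V, y v = 1) →
      M.sup' hM (fun m => ∑ v : V, x v * (m v : ℝ)) ≤
      M.sup' hM (fun m => ∑ v : V, y v * (m v : ℝ))) :
    x w = 0 :=
  covering_weight_vanishes_hist_general Tcard M hM hhist w hw x hx0 hx1 hcov
end
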